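/- arXiv:2310.17474 — 2 statements merged into one kernel-verified Lean document; each statement's English description precedes it below -/
import Mathlib

section
/- Let X be a finite connected polygonal complex, ∗ a vertex of X, T a spanning tree of G(X), and ⟨S|R⟩ the presentation of the fundamental group π₁(X,∗) associated with retracting T. If ⟨S|R⟩ is ρ-homomorphism stable for a rate function ρ, then X is ρ-cocycle stable, with the same rate ρ. -/
open scoped Classical

noncomputable section

namespace StabilityPaper

/-! ## Graphs à la Bass–Serre -/

structure BSGraph (V E : Type) where
  ι : E → V
  τ : E → V
  bar : E → E
  bar_invol : ∀ e, bar (bar e) = e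
  τ_bar : ∀ e, τ (bar e) = ι e
  bar_ne : ∀ e, bar e ≠ e

namespace BSGraph

variable {V E : Type}

/-- A path is a list of directed edges, consecutive ones being composable. -/
def IsPath (G : BSGraph V E) (p : List E) : Prop :=
  p.Chain' fun e f => G.τ e = G.ι f

def pathStart (G : BSGraph V E) (p : List E) : Option V := p.head?.map G.ι

def pathEnd (G : BSGraph V E) (p : List E) : Option V := p.getLast?.map G.τ

def IsClosedPath (G : BSGraph V E) (p : List E) : Prop :=
  p ≠ [] ∧ G.IsPath p ∧ G.pathStart p = G.pathEnd p

def NonBacktracking (G : BSGraph V E) (p : List E) : Prop :=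
  p.Chain' fun e f => f ≠ G.bar e

/-- The reverse orientation of a path. -/
def inv (G : BSGraph V E) (p : List E) : List E := (p.map G.bar).reverse

/-- Cyclically reduced: all cyclic shifts are non-backtracking. -/
def CyclicallyReduced (G : BSGraph V E) (p : List E) : Prop :=
  ∀ k, G.NonBacktracking (p.rotate k)

def Connected (G : BSGraph V E) : Prop :=
  ∀ x y : V, Relation.ReflTransGen (fun a b => ∃ e, G.ι e = a ∧ G.τ e = b) x y

/-- All shifts and reversals of a path: out of these one obtains the unoriented polygons. -/
def orbitFinset [DecidableEq E] (G : BSGraph V E) (p : List E) : Finset (List E) :=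
  ((Finset.range p.length).image fun k => p.rotate k) ∪
    ((Finset.range p.length).image fun k => (G.inv p).rotate k)


variable (G : BSGraph V E)

lemma length_inv (l : List E) : (G.inv l).length = l.length := by
  simp [BSGraph.inv]

lemma inv_inv (l : List E) : G.inv (G.inv l) = l := by
  unfold BSGraph.inv
  rw [List.map_reverse, List.reverse_reverse, List.map_map]
  simp [Function.comp_def, G.bar_invol]

lemma inv_rotate (l : List E) (k : ℕ) :
    G.inv (l.rotate k) = (G.inv l).rotate (l.length - k % l.length) := by
  unfold BSGraph.inv
  rw [List.map_rotate, List.reverse_rotate]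
  simp

lemma rotate_inv (l : List E) (k : ℕ) :
    (G.inv l).rotate k = G.inv (l.rotate (l.length - k % l.length)) := by
  unfold BSGraph.inv
  rw [List.map_rotate, List.rotate_reverse]
  simp

lemma nonback_inv {q : List E} (h : G.NonBacktracking q) : G.NonBacktracking (G.inv q) := by
  unfold BSGraph.NonBacktracking BSGraph.inv at *
  unfold List.Chain' at *
  rw [List.isChain_reverse, List.isChain_map]
  refine h.imp ?_
  intro a b hab
  show G.bar a ≠ G.bar (G.bar b)
  rw [G.bar_invol]
  exact Ne.symm hab

lemma cyclRed_inv {w : List E} (h : G.CyclicallyReduced w) :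
    G.CyclicallyReduced (G.inv w) := by
  intro k
  rw [G.rotate_inv]
  exact G.nonback_inv (h _)

variable [DecidableEq E]

lemma rotate_mem_orbitFinset {p : List E} (hp : p ≠ []) (j : ℕ) :
    p.rotate j ∈ G.orbitFinset p := by
  apply Finset.mem_union_left
  refine Finset.mem_image.2 ⟨j % p.length, Finset.mem_range.2 (Nat.mod_lt _ (List.length_pos_iff.2 hp)), ?_⟩
  rw [List.rotate_mod]

lemma inv_rotate_mem_orbitFinset {p : List E} (hp : p ≠ []) (j : ℕ) :
    (G.inv p).rotate j ∈ G.orbitFinset p := by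
  apply Finset.mem_union_right
  refine Finset.mem_image.2 ⟨j % p.length, Finset.mem_range.2 (Nat.mod_lt _ (List.length_pos_iff.2 hp)), ?_⟩
  conv_rhs => rw [← List.rotate_mod, G.length_inv]

lemma mem_orbitFinset {p q : List E} (hq : q ∈ G.orbitFinset p) :
    ∃ j, q = p.rotate j ∨ q = (G.inv p).rotate j := by
  rcases Finset.mem_union.1 hq with h | h <;>
    · obtain ⟨j, _, rfl⟩ := Finset.mem_image.1 h
      exact ⟨j, by tauto⟩

lemma orbit_rotate {p q : List E} (hp : p ≠ []) (hq : q ∈ G.orbitFinset p) (k : ℕ) :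
    q.rotate k ∈ G.orbitFinset p := by
  obtain ⟨j, rfl | rfl⟩ := G.mem_orbitFinset hq <;>
    rw [List.rotate_rotate]
  · exact G.rotate_mem_orbitFinset hp _
  · exact G.inv_rotate_mem_orbitFinset hp _

lemma orbit_inv {p q : List E} (hp : p ≠ []) (hq : q ∈ G.orbitFinset p) :
    G.inv q ∈ G.orbitFinset p := by
  obtain ⟨j, rfl | rfl⟩ := G.mem_orbitFinset hq
  · rw [G.inv_rotate]
    exact G.inv_rotate_mem_orbitFinset hp _
  · rw [G.inv_rotate, G.inv_inv, G.length_inv]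
    exact G.rotate_mem_orbitFinset hp _

lemma orbit_cyclRed {p q : List E} (hp : G.CyclicallyReduced p) (hq : q ∈ G.orbitFinset p) :
    G.CyclicallyReduced q := by
  obtain ⟨j, rfl | rfl⟩ := G.mem_orbitFinset hq <;> intro k <;> rw [List.rotate_rotate]
  · exact hp _
  · exact G.cyclRed_inv hp _

lemma orbit_length {p q : List E} (hq : q ∈ G.orbitFinset p) : q.length = p.length := by
  obtain ⟨j, rfl | rfl⟩ := G.mem_orbitFinset hq <;> simp [G.length_inv]


end BSGraph

/-! ## Polygonal complexes -/

structure PolyComplex (V E : Type) [Fintype V] [Fintype E] [DecidableEq V] [DecidableEq E]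
    extends BSGraph V E where
  P : Finset (List E)
  P_closed : ∀ p ∈ P, toBSGraph.IsClosedPath p
  P_cyclRed : ∀ p ∈ P, toBSGraph.CyclicallyReduced p
  P_rotate : ∀ p ∈ P, ∀ k, p.rotate k ∈ P
  P_inv : ∀ p ∈ P, toBSGraph.inv p ∈ P

variable {V E : Type} [Fintype V] [Fintype E] [DecidableEq V] [DecidableEq E]

/-- Average of a real valued function over a finset (uniform expectation). -/
def eavg {β : Type*} (s : Finset β) (f : β → ℝ) : ℝ := (∑ x ∈ s, f x) / s.card

/-- The probability that a uniformly random point is moved by the permutation `σ`;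
this is the normalized Hamming distance from `σ` to the identity. -/
def moveProb {n : ℕ} (σ : Equiv.Perm (Fin n)) : ℝ :=
  ((Finset.univ.filter fun i : Fin n => σ i ≠ i).card : ℝ) / n

/-- The normalized Hamming distance with errors between `σ ∈ Sym(n)` and `τ ∈ Sym(N)`,
`n ≤ N`. -/
def dH {n N : ℕ} (h : n ≤ N) (σ : Equiv.Perm (Fin n)) (τ : Equiv.Perm (Fin N)) : ℝ :=
  1 - ((Finset.univ.filter fun i : Fin n =>
    ((σ i : ℕ) = ((τ (Fin.castLE h i) : Fin N) : ℕ))).card : ℝ) / N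

namespace PolyComplex

variable (X : PolyComplex V E)

/-- A `1`-cochain with `Sym(n)` coefficients: an antisymmetric assignment of permutations to
directed edges. -/
def IsCochain {n : ℕ} (α : E → Equiv.Perm (Fin n)) : Prop :=
  ∀ e, α (X.bar e) = (α e)⁻¹

end PolyComplex

/-- Evaluation of a `1`-cochain along a path. -/
def evalPath {n : ℕ} (α : E → Equiv.Perm (Fin n)) (p : List E) : Equiv.Perm (Fin n) :=
  (p.map α).prod

namespace PolyComplex

variable (X : PolyComplex V E)

/-- A `1`-cocycle: a `1`-cochain whose coboundary is trivial on every polygon. -/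
def IsCocycle {n : ℕ} (α : E → Equiv.Perm (Fin n)) : Prop :=
  X.IsCochain α ∧ ∀ p ∈ X.P, evalPath α p = 1

/-- The set of orientations (shifts and reversals) of a polygon, i.e. the unoriented polygon
determined by `p`. -/
def orientations (p : List E) : Finset (List E) :=
  X.P.filter fun q => ∃ k, q = p.rotate k ∨ q = (X.toBSGraph.inv p).rotate k

/-- The unoriented polygons of `X`. -/
def polygonOrbits : Finset (Finset (List E)) := X.P.image fun p => X.orientations p

/-- The unoriented edges of `X`. -/
def edgeOrbits : Finset (Finset E) := Finset.univ.image fun e => ({e, X.bar e} : Finset E)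

/-- The local defect `‖δα‖` of a `1`-cochain: the probability that a uniformly random point is
moved by `δα(π)`, for a uniformly random unoriented polygon `[π]` and a uniformly random
orientation `π` of it. -/
def localDefect {n : ℕ} (α : E → Equiv.Perm (Fin n)) : ℝ :=
  eavg X.polygonOrbits fun O => eavg O fun p => moveProb (evalPath α p)

/-- The distance between two `1`-cochains: expected normalized Hamming distance (with errors)
over a uniformly random unoriented edge. -/
def cochainDist {n N : ℕ} (h : n ≤ N) (α : E → Equiv.Perm (Fin n))
    (φ : E → Equiv.Perm (Fin N)) : ℝ :=
  eavg X.edgeOrbits fun O => eavg O fun e => dH h (α e) (φ e)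

/-- The global defect of a `1`-cochain: its distance to the nearest `1`-cocycle (with possibly
larger permutation coefficients). -/
def DefCocyc {n : ℕ} (α : E → Equiv.Perm (Fin n)) : ℝ :=
  sInf { d : ℝ | ∃ (N : ℕ) (h : n ≤ N) (φ : E → Equiv.Perm (Fin N)),
    X.IsCocycle φ ∧ d = X.cochainDist h α φ }

/-- `ρ`-cocycle stability of the polygonal complex `X`. -/
def CocycleStable (ρ : ℝ → ℝ) : Prop :=
  ∀ (n : ℕ), 1 ≤ n → ∀ α : E → Equiv.Perm (Fin n), X.IsCochain α →
    X.DefCocyc α ≤ ρ (X.localDefect α)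

end PolyComplex

/-- A rate function: nondecreasing on `[0,∞)`, nonnegative there, tending to `0` at `0`. -/
def IsRateFunction (ρ : ℝ → ℝ) : Prop :=
  MonotoneOn ρ (Set.Ici 0) ∧ (∀ x, 0 ≤ x → 0 ≤ ρ x) ∧
    Filter.Tendsto ρ (nhdsWithin 0 (Set.Ici 0)) (nhds 0)

/-! ## Coverings -/

/-- A combinatorial map between graphs. -/
structure GraphHom {V₁ E₁ V₂ E₂ : Type} (G : BSGraph V₁ E₁) (H : BSGraph V₂ E₂) where
  fV : V₁ → V₂
  fE : E₁ → E₂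
  map_ι : ∀ e, H.ι (fE e) = fV (G.ι e)
  map_τ : ∀ e, H.τ (fE e) = fV (G.τ e)
  map_bar : ∀ e, fE (G.bar e) = H.bar (fE e)

/-- A covering: local bijectivity of stars. -/
def IsCovering {V₁ E₁ V₂ E₂ : Type} {G : BSGraph V₁ E₁} {H : BSGraph V₂ E₂}
    (f : GraphHom G H) : Prop :=
  ∀ y : V₁, Set.BijOn f.fE {e | G.τ e = y} {e' | H.τ e' = f.fV y}

/-- The lift of the path `p` at the vertex `v` is closed. -/
def liftClosedAt {V₁ E₁ V₂ E₂ : Type} {G : BSGraph V₁ E₁} {H : BSGraph V₂ E₂}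
    (f : GraphHom G H) (p : List E₂) (v : V₁) : Prop :=
  ∃ q : List E₁, G.IsPath q ∧ q.map f.fE = p ∧
    G.pathStart q = some v ∧ G.pathEnd q = some v

/-- A finite `H`-labeled graph. -/
structure FinLabeledGraph {V₂ E₂ : Type} (H : BSGraph V₂ E₂) where
  V : Type
  E : Type
  fintypeV : Fintype V
  fintypeE : Fintype E
  G : BSGraph V E
  lab : GraphHom G H

namespace FinLabeledGraph

variable {V₂ E₂ : Type} {H : BSGraph V₂ E₂}

/-- An embedding of labeled graphs. -/
def Embeds (A B : FinLabeledGraph H) : Prop :=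
  ∃ g : GraphHom A.G B.G, Function.Injective g.fV ∧ Function.Injective g.fE ∧
    (∀ v, B.lab.fV (g.fV v) = A.lab.fV v) ∧ (∀ e, B.lab.fE (g.fE e) = A.lab.fE e)

/-- An isomorphism of labeled graphs. -/
def LabIso (A B : FinLabeledGraph H) : Prop :=
  ∃ g : GraphHom A.G B.G, Function.Bijective g.fV ∧ Function.Bijective g.fE ∧
    (∀ v, B.lab.fV (g.fV v) = A.lab.fV v) ∧ (∀ e, B.lab.fE (g.fE e) = A.lab.fE e)

/-- The number of unoriented edges of a finite labeled graph. -/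
def unorientedEdgeCount (A : FinLabeledGraph H) : ℕ :=
  letI := A.fintypeE
  (Finset.univ.image fun e : A.E => ({e, A.G.bar e} : Finset A.E)).card

/-- The largest number of unoriented edges of a common labeled subgraph. -/
def maxCommonEdges (B C : FinLabeledGraph H) : ℕ :=
  sSup { m : ℕ | ∃ A : FinLabeledGraph H, A.Embeds B ∧ A.Embeds C ∧
    m = A.unorientedEdgeCount }

/-- Normalized edit distance between finite labeled graphs. -/
def editDist (B C : FinLabeledGraph H) : ℝ :=
  1 - (maxCommonEdges B C : ℝ) / (max B.unorientedEdgeCount C.unorientedEdgeCount : ℕ)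

end FinLabeledGraph

namespace PolyComplex

variable (X : PolyComplex V E)

/-- A genuine covering of the polygonal complex `X`: a covering of the underlying graph all of
whose lifts of polygons are closed. -/
def GenuineCovering (Z : FinLabeledGraph X.toBSGraph) : Prop :=
  IsCovering Z.lab ∧ ∀ p ∈ X.P, ∀ v : Z.V,
    X.toBSGraph.pathStart p = some (Z.lab.fV v) → liftClosedAt Z.lab p v

/-- The local defect of a covering: the probability that a uniformly random lift of a uniformly
random polygon is open. -/
def defCover (Y : FinLabeledGraph X.toBSGraph) : ℝ :=
  letI := Y.fintypeV
  eavg X.polygonOrbits fun O => eavg O fun p =>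
    eavg (Finset.univ.filter fun v : Y.V => X.toBSGraph.pathStart p = some (Y.lab.fV v))
      fun v => if liftClosedAt Y.lab p v then 0 else 1

/-- The global defect of a covering: its edit distance to the nearest genuine covering of `X`. -/
def DefCover (Y : FinLabeledGraph X.toBSGraph) : ℝ :=
  sInf { d : ℝ | ∃ Z : FinLabeledGraph X.toBSGraph, X.GenuineCovering Z ∧
    d = Y.editDist Z }

/-- `ρ`-covering stability of the polygonal complex `X`. -/
def CoveringStable (ρ : ℝ → ℝ) : Prop :=
  ∀ Y : FinLabeledGraph X.toBSGraph, IsCovering Y.lab →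
    X.DefCover Y ≤ ρ (X.defCover Y)

end PolyComplex

end StabilityPaper

namespace StabilityPaper

variable {V E : Type} [Fintype V] [Fintype E] [DecidableEq V] [DecidableEq E]

/-- The data of the presentation of the fundamental group `π₁(X, base)` obtained by retracting
a spanning tree `T` of the underlying graph of `X`: the tree is a bar-closed, connected edge
set with `|V| - 1` unoriented edges; the generating set `S` consists of one chosen orientation
of each unoriented edge outside the tree; the relations are indexed by the unoriented polygons
of `X`, via a chosen representative orientation `rep O` of each one, read as a word in the
generators. -/
structure TreePresentation (X : PolyComplex V E) where
  base : V
  T : Finset E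
  T_bar : ∀ e ∈ T, X.bar e ∈ T
  T_conn : ∀ x y : V,
    Relation.ReflTransGen (fun a b => ∃ e ∈ T, X.ι e = a ∧ X.τ e = b) x y
  T_card : T.card = 2 * (Fintype.card V - 1)
  S : Finset E
  S_not_tree : ∀ e ∈ S, e ∉ T
  S_orient : ∀ e, e ∉ T → (e ∈ S ↔ X.bar e ∉ S)
  rep : Finset (List E) → List E
  rep_mem : ∀ O ∈ X.polygonOrbits, rep O ∈ O

namespace TreePresentation

variable {X : PolyComplex V E} (P : TreePresentation X)

/-- The letter of the free group `F(S)` read off a directed edge: a generator for a chosen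
orientation outside the tree, its inverse for the reverse orientation, and the empty word for
tree edges. -/
def edgeWord (e : E) : FreeGroup ↥P.S :=
  if h : e ∈ P.S then FreeGroup.of (⟨e, h⟩ : ↥P.S)
  else if h' : X.bar e ∈ P.S then (FreeGroup.of (⟨X.bar e, h'⟩ : ↥P.S))⁻¹
  else 1

/-- The word in `F(S)` read off a path of `X`. -/
def pathWord (p : List E) : FreeGroup ↥P.S := (p.map P.edgeWord).prod

/-- The local defect of `f : S → Sym(n)` with respect to the presentation obtained by
retracting the spanning tree: one relation for each unoriented polygon. -/
def defHom {n : ℕ} (f : ↥P.S → Equiv.Perm (Fin n)) : ℝ :=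
  eavg X.polygonOrbits fun O => moveProb (FreeGroup.lift f (P.pathWord (P.rep O)))

/-- The global defect of `f : S → Sym(n)`: its distance to the nearest map `S → Sym(N)`,
`N ≥ n`, killing all the relations. -/
def DefHom {n : ℕ} (f : ↥P.S → Equiv.Perm (Fin n)) : ℝ :=
  sInf { d : ℝ | ∃ (N : ℕ) (h : n ≤ N) (φ : ↥P.S → Equiv.Perm (Fin N)),
    (∀ O ∈ X.polygonOrbits, FreeGroup.lift φ (P.pathWord (P.rep O)) = 1) ∧
    d = eavg (Finset.univ : Finset ↥P.S) fun s => dH h (f s) (φ s) }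

/-- `ρ`-homomorphism stability of the presentation of `π₁(X, base)` obtained by retracting the
spanning tree. -/
def HomStable (ρ : ℝ → ℝ) : Prop :=
  ∀ (n : ℕ), 1 ≤ n → ∀ f : ↥P.S → Equiv.Perm (Fin n), P.DefHom f ≤ ρ (P.defHom f)

end TreePresentation

end StabilityPaper

namespace StabilityPaper


/-! ## Auxiliary lemmas -/

section EavgLemmas

lemma eavg_nonneg {β : Type*} {s : Finset β} {f : β → ℝ} (h : ∀ x ∈ s, 0 ≤ f x) :
    0 ≤ eavg s f :=
  div_nonneg (Finset.sum_nonneg h) (by positivity)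

lemma eavg_congr {β : Type*} {s : Finset β} {f g : β → ℝ} (h : ∀ x ∈ s, f x = g x) :
    eavg s f = eavg s g := by
  unfold eavg; rw [Finset.sum_congr rfl h]

lemma eavg_const {β : Type*} {s : Finset β} (hs : s.Nonempty) {f : β → ℝ} {c : ℝ}
    (h : ∀ x ∈ s, f x = c) : eavg s f = c := by
  unfold eavg
  rw [Finset.sum_congr rfl h, Finset.sum_const, nsmul_eq_mul]
  have h0 : (s.card : ℝ) ≠ 0 := by
    have := Finset.card_pos.2 hs
    positivity
  field_simp

lemma eavg_eq_zero {β : Type*} {s : Finset β} {f : β → ℝ} (h : ∀ x ∈ s, f x = 0) :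
    eavg s f = 0 := by
  unfold eavg
  rw [Finset.sum_congr rfl h, Finset.sum_const, smul_zero, zero_div]

lemma eavg_pair {β : Type*} [DecidableEq β] {a b : β} (hab : a ≠ b) {f : β → ℝ}
    (h : f a = f b) : eavg {a, b} f = f a := by
  unfold eavg
  rw [Finset.sum_pair hab, Finset.card_pair hab, ← h]
  push_cast
  ring

end EavgLemmas

section PermLemmas

open Equiv Finset

lemma moveProb_nonneg {n : ℕ} (σ : Equiv.Perm (Fin n)) : 0 ≤ moveProb σ := by
  unfold moveProb; positivity

lemma moveProb_conj {n : ℕ} (t x : Equiv.Perm (Fin n)) :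
    moveProb (t⁻¹ * x * t) = moveProb x := by
  unfold moveProb
  congr 1
  norm_cast
  apply Finset.card_equiv t
  intro i
  rw [Finset.mem_filter, Finset.mem_filter]
  simp only [Finset.mem_coe, Finset.coe_filter, Set.mem_setOf_eq, Finset.mem_filter, Finset.mem_univ, true_and, Equiv.Perm.mul_apply, ne_eq]
  constructor
  · intro hne h
    exact hne (by rw [h]; simp)
  · intro hne h
    apply hne
    have := congrArg t h
    simpa using this

lemma moveProb_conj' {n : ℕ} (t x : Equiv.Perm (Fin n)) :
    moveProb (t * x * t⁻¹) = moveProb x := by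
  have := moveProb_conj t⁻¹ x
  simpa using this

lemma moveProb_inv {n : ℕ} (σ : Equiv.Perm (Fin n)) : moveProb σ⁻¹ = moveProb σ := by
  unfold moveProb
  congr 1
  norm_cast
  apply Finset.card_equiv σ⁻¹
  intro i
  simp only [Finset.mem_coe, Finset.coe_filter, Set.mem_setOf_eq, Finset.mem_filter, Finset.mem_univ, true_and, ne_eq]
  constructor
  · intro hne h
    rw [show σ (σ⁻¹ i) = i from σ.apply_symm_apply i] at h
    exact hne h.symm
  · intro hne h
    apply hne
    rw [show σ (σ⁻¹ i) = i from σ.apply_symm_apply i, h]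

lemma dH_eq {n N : ℕ} (h : n ≤ N) (σ : Equiv.Perm (Fin n)) (τ : Equiv.Perm (Fin N)) :
    dH h σ τ = 1 - ((univ.filter fun i : Fin n =>
      Fin.castLE h (σ i) = τ (Fin.castLE h i)).card : ℝ) / N := by
  unfold dH
  congr 3
  apply Finset.card_equiv (Equiv.refl _)
  intro i
  simp only [Finset.mem_filter, Finset.mem_univ, true_and, Equiv.refl_apply]
  rw [Fin.ext_iff, Fin.coe_castLE]

lemma via_castLE {n N : ℕ} (h : n ≤ N) (x : Equiv.Perm (Fin n)) (i : Fin n) :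
    Equiv.Perm.viaEmbeddingHom (Fin.castLEEmb h) x (Fin.castLE h i) = Fin.castLE h (x i) := by
  rw [Equiv.Perm.viaEmbeddingHom_apply]
  have := Equiv.Perm.viaEmbedding_apply x (Fin.castLEEmb h) i
  simpa using this

lemma dH_conj {n N : ℕ} (h : n ≤ N) (u w σ : Equiv.Perm (Fin n)) (τ : Equiv.Perm (Fin N)) :
    dH h (u * σ * w) (Equiv.Perm.viaEmbeddingHom (Fin.castLEEmb h) u * τ *
      Equiv.Perm.viaEmbeddingHom (Fin.castLEEmb h) w) = dH h σ τ := by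
  rw [dH_eq, dH_eq]
  congr 2
  norm_cast
  have key : ∀ i : Fin n,
      (Fin.castLE h ((u * σ * w) i) =
        (Equiv.Perm.viaEmbeddingHom (Fin.castLEEmb h) u * τ *
          Equiv.Perm.viaEmbeddingHom (Fin.castLEEmb h) w) (Fin.castLE h i)) ↔
      (Fin.castLE h (σ (w i)) = τ (Fin.castLE h (w i))) := by
    intro i
    simp only [Equiv.Perm.mul_apply]
    rw [via_castLE h w i, ← via_castLE h u (σ (w i))]
    exact (Equiv.Perm.viaEmbeddingHom (Fin.castLEEmb h) u).injective.eq_iff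
  apply Finset.card_equiv w
  intro i
  simp only [Finset.mem_filter, Finset.mem_univ, true_and]
  exact key i

lemma dH_inv {n N : ℕ} (h : n ≤ N) (σ : Equiv.Perm (Fin n)) (τ : Equiv.Perm (Fin N)) :
    dH h σ⁻¹ τ⁻¹ = dH h σ τ := by
  rw [dH_eq, dH_eq]
  congr 2
  norm_cast
  apply Finset.card_nbij' (fun i => σ⁻¹ i) (fun j => σ j)
  · intro a ha
    simp only [Finset.mem_coe, Finset.coe_filter, Set.mem_setOf_eq, Finset.mem_filter, Finset.mem_univ, true_and] at ha ⊢
    rw [show σ (σ⁻¹ a) = a by simp, ha]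
    simp
  · intro a ha
    simp only [Finset.mem_coe, Finset.coe_filter, Set.mem_setOf_eq, Finset.mem_filter, Finset.mem_univ, true_and] at ha ⊢
    rw [show σ⁻¹ (σ a) = a by simp, ha]
    simp
  · intro a _; simp
  · intro a _; simp

lemma dH_self {n N : ℕ} (h : n ≤ N) (σ : Equiv.Perm (Fin n)) :
    dH h σ (Equiv.Perm.viaEmbeddingHom (Fin.castLEEmb h) σ) = 1 - (n : ℝ) / N := by
  rw [dH_eq]
  congr 2
  rw [Finset.filter_true_of_mem, Finset.card_univ, Fintype.card_fin]
  intro i _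
  rw [via_castLE]

lemma dH_refl {n : ℕ} (hn : 1 ≤ n) (σ : Equiv.Perm (Fin n)) :
    dH (le_refl n) σ σ = 0 := by
  rw [dH_eq]
  have hcast : ∀ j : Fin n, Fin.castLE (le_refl n) j = j := fun j => Fin.ext (by simp)
  rw [Finset.filter_true_of_mem, Finset.card_univ, Fintype.card_fin]
  · have h0 : (n : ℝ) ≠ 0 := by positivity
    field_simp
    norm_num
  · intro i _
    rw [hcast, hcast]

lemma dH_card_le {n N : ℕ} (h : n ≤ N) (σ : Equiv.Perm (Fin n)) (τ : Equiv.Perm (Fin N)) :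
    ((univ.filter fun i : Fin n =>
      ((σ i : ℕ) = ((τ (Fin.castLE h i) : Fin N) : ℕ))).card) ≤ n := by
  calc _ ≤ (univ : Finset (Fin n)).card := Finset.card_filter_le _ _
  _ = n := by simp

lemma dH_ge {n N : ℕ} (h : n ≤ N) (σ : Equiv.Perm (Fin n)) (τ : Equiv.Perm (Fin N)) :
    1 - (n : ℝ) / N ≤ dH h σ τ := by
  unfold dH
  have h2 : (((univ.filter fun i : Fin n =>
      ((σ i : ℕ) = ((τ (Fin.castLE h i) : Fin N) : ℕ))).card) : ℝ) ≤ (n : ℝ) := by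
    exact_mod_cast dH_card_le h σ τ
  rcases Nat.eq_zero_or_pos N with hN | hN
  · subst hN; simp
  · have hN' : (0:ℝ) < N := by exact_mod_cast hN
    have hdiv : (((univ.filter fun i : Fin n =>
        ((σ i : ℕ) = ((τ (Fin.castLE h i) : Fin N) : ℕ))).card) : ℝ) / N ≤ (n : ℝ) / N := by
      gcongr
    linarith

lemma dH_nonneg {n N : ℕ} (h : n ≤ N) (σ : Equiv.Perm (Fin n)) (τ : Equiv.Perm (Fin N)) :
    0 ≤ dH h σ τ := by
  have h1 := dH_ge h σ τ
  have h2 : (n : ℝ) / N ≤ 1 := by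
    rcases Nat.eq_zero_or_pos N with hN | hN
    · subst hN; simp
    · have hN' : (0:ℝ) < N := by exact_mod_cast hN
      rw [div_le_one hN']
      exact_mod_cast h
  linarith

end PermLemmas

section GroupListLemmas

lemma conj_eq_one {M : Type*} [Group M] {t x : M} (h : t⁻¹ * x * t = 1) : x = 1 := by
  have := congrArg (fun y => t * y * t⁻¹) h
  simpa [mul_assoc] using this

lemma prod_rotate_conj {M : Type*} [Group M] (l : List M) (k : ℕ) :
    (l.rotate k).prod = (l.take (k % l.length)).prod⁻¹ * l.prod * (l.take (k % l.length)).prod := by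
  rcases eq_or_ne l [] with rfl | hl
  · simp
  · have hlen : 0 < l.length := List.length_pos_iff.2 hl
    have hk : k % l.length ≤ l.length := (Nat.mod_lt _ hlen).le
    conv_lhs => rw [← List.rotate_mod, List.rotate_eq_drop_append_take hk]
    rw [List.prod_append]
    conv_rhs => rw [← List.prod_take_mul_prod_drop l (k % l.length)]
    group

end GroupListLemmas

section GraphLemmas

variable {V E : Type}

lemma BSGraph.ι_bar (G : BSGraph V E) (e : E) : G.ι (G.bar e) = G.τ e := by
  have h := G.τ_bar (G.bar e)
  rw [G.bar_invol] at h
  exact h.symm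

lemma pathProd_conj (G : BSGraph V E) {M : Type*} [Group M] (g : V → M) (β : E → M) :
    ∀ (p : List E), G.IsPath p → ∀ v w, G.pathStart p = some v → G.pathEnd p = some w →
      (p.map fun e => g (G.ι e) * β e * (g (G.τ e))⁻¹).prod = g v * (p.map β).prod * (g w)⁻¹ := by
  intro p
  induction p with
  | nil => intro _ v w hv _; simp [BSGraph.pathStart] at hv
  | cons e rest ih =>
    intro hp v w hv hw
    have hv' : v = G.ι e := by
      simp [BSGraph.pathStart] at hv
      exact hv.symm
    subst hv'
    cases rest with
    | nil =>
      have hw' : w = G.τ e := by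
        simp [BSGraph.pathEnd] at hw
        exact hw.symm
      subst hw'
      simp
    | cons e' t =>
      obtain ⟨hte, hp'⟩ := List.isChain_cons_cons.1 hp
      have hw' : G.pathEnd (e' :: t) = some w := by
        rw [← hw]
        simp [BSGraph.pathEnd, List.getLast?_cons_cons]
      have hstep := ih hp' (G.ι e') w (by simp [BSGraph.pathStart]) hw'
      rw [List.map_cons, List.prod_cons, hstep, hte]
      simp only [List.map_cons, List.prod_cons]
      group

lemma closedProd_conj (G : BSGraph V E) {M : Type*} [Group M] (g : V → M) (β : E → M)
    {p : List E} (hp : G.IsClosedPath p) :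
    ∃ v, (p.map fun e => g (G.ι e) * β e * (g (G.τ e))⁻¹).prod
      = g v * (p.map β).prod * (g v)⁻¹ := by
  obtain ⟨hne, hpath, hse⟩ := hp
  have hs : G.pathStart p = some (G.ι (p.head hne)) := by
    unfold BSGraph.pathStart
    rw [List.head?_eq_head hne]
    rfl
  exact ⟨_, pathProd_conj G g β p hpath _ _ hs (hse ▸ hs)⟩

lemma map_inv_prod (G : BSGraph V E) {M : Type*} [Group M] {β : E → M}
    (hβ : ∀ e, β (G.bar e) = (β e)⁻¹) (p : List E) :
    ((G.inv p).map β).prod = ((p.map β).prod)⁻¹ := by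
  have h1 : (G.inv p).map β = (p.map fun e => (β e)⁻¹).reverse := by
    unfold BSGraph.inv
    rw [List.map_reverse, List.map_map]
    congr 1
    exact List.map_congr_left fun e _ => hβ e
  rw [h1, List.prod_inv_reverse]
  congr 2
  rw [List.map_map]
  rfl

lemma orbit_prod {G : BSGraph V E} {M : Type*} [Group M] {β : E → M}
    (hβ : ∀ e, β (G.bar e) = (β e)⁻¹) {p q : List E}
    (hq : ∃ k, q = p.rotate k ∨ q = (G.inv p).rotate k) :
    ∃ t : M, (q.map β).prod = t⁻¹ * (p.map β).prod * t ∨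
      (q.map β).prod = t⁻¹ * ((p.map β).prod)⁻¹ * t := by
  obtain ⟨k, hk | hk⟩ := hq
  · subst hk
    refine ⟨((p.map β).take (k % (p.map β).length)).prod, Or.inl ?_⟩
    rw [List.map_rotate]
    exact prod_rotate_conj (p.map β) k
  · subst hk
    refine ⟨(((G.inv p).map β).take (k % ((G.inv p).map β).length)).prod, Or.inr ?_⟩
    rw [List.map_rotate, prod_rotate_conj, map_inv_prod G hβ]

lemma exists_potential {V E : Type} [DecidableEq V] [DecidableEq E] (G : BSGraph V E)
    {M : Type*} [Group M] (a : E → M) (ha : ∀ e, a (G.bar e) = (a e)⁻¹) :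
    ∀ (m : ℕ) (W : Finset V) (T : Finset E), W.card = m →
      (∀ e ∈ T, G.bar e ∈ T) → (∀ e ∈ T, G.τ e ∈ W) →
      (∀ x ∈ W, ∀ y ∈ W,
        Relation.ReflTransGen (fun u v => ∃ e ∈ T, G.ι e = u ∧ G.τ e = v) x y) →
      T.card = 2 * (W.card - 1) →
      ∃ g : V → M, ∀ e ∈ T, g (G.τ e) = g (G.ι e) * a e := by
  intro m
  induction m using Nat.strong_induction_on with
  | _ m IH =>
    intro W T hWcard hbar hτ hconn hTcard
    by_cases hW1 : W.card ≤ 1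
    · have hT0 : T.card = 0 := by omega
      have hT : T = ∅ := Finset.card_eq_zero.1 hT0
      subst hT
      exact ⟨fun _ => 1, fun e he => absurd he (Finset.notMem_empty e)⟩
    · push_neg at hW1
      have hdeg1 : ∀ v ∈ W, 1 ≤ (T.filter fun e => G.τ e = v).card := by
        intro v hv
        obtain ⟨u, hu, hune⟩ := Finset.exists_mem_ne hW1 v
        rcases Relation.ReflTransGen.cases_tail (hconn u hu v hv) with heq | hex
        · exact absurd heq.symm hune
        · obtain ⟨c, _, e, he, _, hev⟩ := hex
          exact Finset.card_pos.2 ⟨e, Finset.mem_filter.2 ⟨he, hev⟩⟩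
      have hsum : ∑ v ∈ W, (T.filter fun e => G.τ e = v).card = T.card :=
        (Finset.card_eq_sum_card_fiberwise hτ).symm
      have hleaf : ∃ v ∈ W, (T.filter fun e => G.τ e = v).card = 1 := by
        by_contra hno
        push_neg at hno
        have h2 : ∀ v ∈ W, 2 ≤ (T.filter fun e => G.τ e = v).card := by
          intro v hv
          have ha1 := hdeg1 v hv
          have ha2 := hno v hv
          omega
        have hge : 2 * W.card ≤ ∑ v ∈ W, (T.filter fun e => G.τ e = v).card := by
          calc 2 * W.card = ∑ _v ∈ W, 2 := by rw [Finset.sum_const, smul_eq_mul, mul_comm]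
          _ ≤ _ := Finset.sum_le_sum h2
        omega
      obtain ⟨v, hvW, hv1⟩ := hleaf
      obtain ⟨e₀, he₀⟩ := Finset.card_eq_one.1 hv1
      have he₀mem : e₀ ∈ T.filter fun e => G.τ e = v := he₀ ▸ Finset.mem_singleton_self e₀
      have he₀T : e₀ ∈ T := (Finset.mem_filter.1 he₀mem).1
      have hτe₀ : G.τ e₀ = v := (Finset.mem_filter.1 he₀mem).2
      have huniq : ∀ e ∈ T, G.τ e = v → e = e₀ := fun e he hev =>
        Finset.mem_singleton.1 (he₀ ▸ Finset.mem_filter.2 ⟨he, hev⟩)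
      have hbar₀T : G.bar e₀ ∈ T := hbar e₀ he₀T
      have hιbar₀ : G.ι (G.bar e₀) = v := by rw [G.ι_bar]; exact hτe₀
      have huv : G.ι e₀ ≠ v := by
        intro h
        have hb : G.τ (G.bar e₀) = v := by rw [G.τ_bar]; exact h
        exact G.bar_ne e₀ (huniq _ hbar₀T hb)
      have hmemT' : ∀ e, e ∈ (T.erase e₀).erase (G.bar e₀) ↔
          e ∈ T ∧ e ≠ e₀ ∧ e ≠ G.bar e₀ := by
        intro e
        rw [Finset.mem_erase, Finset.mem_erase]
        tauto
      have hT'bar : ∀ e ∈ (T.erase e₀).erase (G.bar e₀),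
          G.bar e ∈ (T.erase e₀).erase (G.bar e₀) := by
        intro e he
        obtain ⟨heT, h1, h2⟩ := (hmemT' e).1 he
        refine (hmemT' _).2 ⟨hbar e heT, ?_, ?_⟩
        · intro h; exact h2 (by rw [← G.bar_invol e, h])
        · intro h
          apply h1
          have hcg := congrArg G.bar h
          rwa [G.bar_invol, G.bar_invol] at hcg
      have hτ'ne : ∀ e ∈ (T.erase e₀).erase (G.bar e₀), G.τ e ≠ v := by
        intro e he h
        obtain ⟨heT, h1, _⟩ := (hmemT' e).1 he
        exact h1 (huniq e heT h)
      have hι'ne : ∀ e ∈ (T.erase e₀).erase (G.bar e₀), G.ι e ≠ v := by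
        intro e he h
        obtain ⟨heT, _, h2⟩ := (hmemT' e).1 he
        have hb : G.τ (G.bar e) = v := by rw [G.τ_bar]; exact h
        have heq := huniq _ (hbar e heT) hb
        apply h2
        rw [← G.bar_invol e, heq]
      have hτ' : ∀ e ∈ (T.erase e₀).erase (G.bar e₀), G.τ e ∈ W.erase v := by
        intro e he
        exact Finset.mem_erase.2 ⟨hτ'ne e he, hτ e ((hmemT' e).1 he).1⟩
      have hstep : ∀ x y,
          Relation.ReflTransGen (fun p q => ∃ e ∈ T, G.ι e = p ∧ G.τ e = q) x y →
          Relation.ReflTransGen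
            (fun p q => ∃ e ∈ (T.erase e₀).erase (G.bar e₀), G.ι e = p ∧ G.τ e = q)
            (if x = v then G.ι e₀ else x) (if y = v then G.ι e₀ else y) := by
        intro x y hxy
        induction hxy with
        | refl => exact Relation.ReflTransGen.refl
        | @tail b c _hab hbc ih =>
          obtain ⟨e, heT, hιe, hτe⟩ := hbc
          by_cases h1 : e = e₀
          · have hcv : c = v := by rw [← hτe, h1, hτe₀]
            have hbu : b = G.ι e₀ := by rw [← hιe, h1]
            have hbv : b ≠ v := by rw [hbu]; exact huv
            rw [if_pos hcv]
            rw [if_neg hbv, hbu] at ih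
            exact ih
          · by_cases h2 : e = G.bar e₀
            · have hbv : b = v := by rw [← hιe, h2, hιbar₀]
              have hcu : c = G.ι e₀ := by rw [← hτe, h2, G.τ_bar]
              have hcv : c ≠ v := by rw [hcu]; exact huv
              rw [if_neg hcv, hcu]
              rw [if_pos hbv] at ih
              exact ih
            · have he' : e ∈ (T.erase e₀).erase (G.bar e₀) := (hmemT' e).2 ⟨heT, h1, h2⟩
              have hbv : b ≠ v := by rw [← hιe]; exact hι'ne e he'
              have hcv : c ≠ v := by rw [← hτe]; exact hτ'ne e he'
              rw [if_neg hcv]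
              rw [if_neg hbv] at ih
              exact ih.tail ⟨e, he', hιe, hτe⟩
      have hconn' : ∀ x ∈ W.erase v, ∀ y ∈ W.erase v,
          Relation.ReflTransGen
            (fun p q => ∃ e ∈ (T.erase e₀).erase (G.bar e₀), G.ι e = p ∧ G.τ e = q) x y := by
        intro x hx y hy
        have hxv := (Finset.mem_erase.1 hx).1
        have hyv := (Finset.mem_erase.1 hy).1
        have hst := hstep x y (hconn x (Finset.mem_of_mem_erase hx) y (Finset.mem_of_mem_erase hy))
        rwa [if_neg hxv, if_neg hyv] at hst
      have hW'card : (W.erase v).card = m - 1 := by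
        rw [Finset.card_erase_of_mem hvW, hWcard]
      have hbarmem : G.bar e₀ ∈ T.erase e₀ := Finset.mem_erase.2 ⟨G.bar_ne e₀, hbar₀T⟩
      have hT'card : ((T.erase e₀).erase (G.bar e₀)).card = 2 * ((W.erase v).card - 1) := by
        have h1 : ((T.erase e₀).erase (G.bar e₀)).card = (T.erase e₀).card - 1 :=
          Finset.card_erase_of_mem hbarmem
        have h2 : (T.erase e₀).card = T.card - 1 := Finset.card_erase_of_mem he₀T
        omega
      obtain ⟨g, hg⟩ := IH (m - 1) (by omega) (W.erase v) ((T.erase e₀).erase (G.bar e₀))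
        hW'card hT'bar hτ' hconn' hT'card
      refine ⟨fun w => if w = v then g (G.ι e₀) * a e₀ else g w, ?_⟩
      intro e heT
      by_cases h1 : e = e₀
      · rw [h1, hτe₀]
        simp [huv]
      · by_cases h2 : e = G.bar e₀
        · rw [h2, G.τ_bar, hιbar₀, ha e₀]
          simp [huv]
        · have he' : e ∈ (T.erase e₀).erase (G.bar e₀) := (hmemT' e).2 ⟨heT, h1, h2⟩
          simp only [if_neg (hτ'ne e he'), if_neg (hι'ne e he')]
          exact hg e he'

end GraphLemmas

section PresentationLemmas

variable {V E : Type} [Fintype V] [Fintype E] [DecidableEq V] [DecidableEq E]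
variable {X : PolyComplex V E} (P : TreePresentation X)

lemma TreePresentation.mem_T_of_not_S {e : E} (h1 : e ∉ P.S) (h2 : X.bar e ∉ P.S) :
    e ∈ P.T := by
  by_contra h
  have hor := P.S_orient e h
  tauto

lemma TreePresentation.edgeWord_tree (e : E) (he : e ∈ P.T) : P.edgeWord e = 1 := by
  have h1 : e ∉ P.S := fun h => P.S_not_tree e h he
  have h2 : X.bar e ∉ P.S := fun h => P.S_not_tree _ h (P.T_bar e he)
  simp only [TreePresentation.edgeWord, dif_neg h1, dif_neg h2]

lemma TreePresentation.edgeWord_bar (e : E) :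
    P.edgeWord (X.bar e) = (P.edgeWord e)⁻¹ := by
  by_cases h1 : e ∈ P.S
  · have hnT : e ∉ P.T := P.S_not_tree e h1
    have h2 : X.bar e ∉ P.S := (P.S_orient e hnT).1 h1
    have h3 : X.bar (X.bar e) ∈ P.S := by rw [X.toBSGraph.bar_invol]; exact h1
    simp only [TreePresentation.edgeWord, dif_neg h2, dif_pos h3, dif_pos h1]
    exact congrArg (fun x => (FreeGroup.of x)⁻¹) (Subtype.ext (X.toBSGraph.bar_invol e))
  · by_cases h2 : X.bar e ∈ P.S
    · simp only [TreePresentation.edgeWord, dif_pos h2, dif_neg h1, inv_inv]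
    · have h3 : X.bar (X.bar e) ∉ P.S := by rw [X.toBSGraph.bar_invol]; exact h1
      simp only [TreePresentation.edgeWord, dif_neg h1, dif_neg h2, dif_neg h3, inv_one]

end PresentationLemmas

/-- **Theorem 3(1).** Let `X` be a finite connected polygonal complex, `∗` a vertex, `T` a
spanning tree of `G(X)`, and `⟨S|R⟩` the presentation of `π₁(X,∗)` associated with retracting
`T`. If `⟨S|R⟩` is `ρ`-homomorphism stable for a rate function `ρ`, then `X` is
`ρ`-cocycle stable, with the same rate. -/
theorem homStable_imp_cocycleStable
    {V E : Type} [Fintype V] [Fintype E] [DecidableEq V] [DecidableEq E]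
    (X : PolyComplex V E) (hconn : X.toBSGraph.Connected)
    (P : TreePresentation X) (ρ : ℝ → ℝ) (hρ : IsRateFunction ρ)
    (hstab : P.HomStable ρ) :
    X.CocycleStable ρ := by
  intro n hn α hα
  classical
  -- local defect is nonnegative
  have hlocnn : 0 ≤ X.localDefect α :=
    eavg_nonneg fun O _ => eavg_nonneg fun p _ => moveProb_nonneg _
  -- the set defining `DefCocyc` is bounded below by 0
  have hbdd : BddBelow { d : ℝ | ∃ (N : ℕ) (h : n ≤ N) (φ : E → Equiv.Perm (Fin N)),
      X.IsCocycle φ ∧ d = X.cochainDist h α φ } := by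
    refine ⟨0, fun d hd => ?_⟩
    obtain ⟨N, hN, φ, _, rfl⟩ := hd
    exact eavg_nonneg fun O _ => eavg_nonneg fun e _ => dH_nonneg hN _ _
  -- the spanning-tree potential
  obtain ⟨g, hg⟩ : ∃ g : V → Equiv.Perm (Fin n), ∀ e ∈ P.T, g (X.τ e) = g (X.ι e) * α e := by
    refine exists_potential X.toBSGraph α hα (Fintype.card V) Finset.univ P.T
      Finset.card_univ (fun e he => P.T_bar e he) (fun e _ => Finset.mem_univ _)
      (fun x _ y _ => P.T_conn x y) ?_
    rw [Finset.card_univ]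
    exact P.T_card
  by_cases hS : P.S.Nonempty
  · -- main case: the generating set is nonempty
    set f : ↥P.S → Equiv.Perm (Fin n) :=
      fun s => g (X.ι s.1) * α s.1 * (g (X.τ s.1))⁻¹ with hf
    have hFe : ∀ e : E, FreeGroup.lift f (P.edgeWord e)
        = g (X.ι e) * α e * (g (X.τ e))⁻¹ := by
      intro e
      by_cases h1 : e ∈ P.S
      · simp only [TreePresentation.edgeWord, dif_pos h1, FreeGroup.lift_apply_of]
        rfl
      · by_cases h2 : X.bar e ∈ P.S
        · simp only [TreePresentation.edgeWord, dif_neg h1, dif_pos h2, map_inv,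
            FreeGroup.lift_apply_of]
          rw [hf]
          simp only
          rw [hα e, X.toBSGraph.τ_bar e, X.toBSGraph.ι_bar e]
          group
        · have heT : e ∈ P.T := P.mem_T_of_not_S h1 h2
          simp only [TreePresentation.edgeWord, dif_neg h1, dif_neg h2, map_one]
          rw [hg e heT]
          group
    -- local defects agree
    have hlocal : P.defHom f = X.localDefect α := by
      unfold TreePresentation.defHom PolyComplex.localDefect
      apply eavg_congr
      intro O hO
      obtain ⟨p₀, hp₀, rfl⟩ := Finset.mem_image.1 hO
      have hval : ∀ q ∈ X.orientations p₀,
          moveProb (evalPath α q) = moveProb (evalPath α p₀) := by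
        intro q hq
        obtain ⟨hqP, k, hk⟩ := Finset.mem_filter.1 hq
        obtain ⟨t, ht | ht⟩ := orbit_prod (G := X.toBSGraph) hα ⟨k, hk⟩
        · show moveProb ((q.map α).prod) = moveProb ((p₀.map α).prod)
          rw [ht, moveProb_conj]
        · show moveProb ((q.map α).prod) = moveProb ((p₀.map α).prod)
          rw [ht, moveProb_conj, moveProb_inv]
      have hp₀mem : p₀ ∈ X.orientations p₀ :=
        Finset.mem_filter.2 ⟨hp₀, 0, Or.inl (List.rotate_zero p₀).symm⟩
      have hOmem : X.orientations p₀ ∈ X.polygonOrbits := Finset.mem_image_of_mem _ hp₀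
      have hrep := P.rep_mem _ hOmem
      have hrepP : P.rep (X.orientations p₀) ∈ X.P := (Finset.mem_filter.1 hrep).1
      have hrepclosed := X.P_closed _ hrepP
      have h1 : FreeGroup.lift f (P.pathWord (P.rep (X.orientations p₀))) =
          ((P.rep (X.orientations p₀)).map
            fun e => g (X.ι e) * α e * (g (X.τ e))⁻¹).prod := by
        unfold TreePresentation.pathWord
        rw [map_list_prod, List.map_map]
        congr 1
        exact List.map_congr_left fun e _ => hFe e
      obtain ⟨v, hv⟩ := closedProd_conj X.toBSGraph g α hrepclosed
      rw [eavg_const ⟨p₀, hp₀mem⟩ hval, h1, hv]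
      show moveProb (g v * (evalPath α (P.rep (X.orientations p₀))) * (g v)⁻¹) = _
      rw [moveProb_conj']
      exact hval _ hrep
    -- homomorphism stability applies
    have hDefHom := hstab n hn f
    have hle1 : X.DefCocyc α ≤ P.DefHom f := by
      unfold PolyComplex.DefCocyc TreePresentation.DefHom
      apply le_csInf
      · refine ⟨_, n, le_refl n, fun _ => 1, fun O _ => ?_, rfl⟩
        exact (FreeGroup.lift_unique (f := fun _ => (1 : Equiv.Perm (Fin n))) 1
          (fun x => rfl)).symm
      · rintro d ⟨N, hN, φ, hrel, rfl⟩
        -- construct the correcting cocycle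
        set gh : V → Equiv.Perm (Fin N) :=
          fun v => Equiv.Perm.viaEmbeddingHom (Fin.castLEEmb hN) (g v) with hgh
        set φt : E → Equiv.Perm (Fin N) :=
          fun e => FreeGroup.lift φ (P.edgeWord e) with hφt
        set Φ : E → Equiv.Perm (Fin N) :=
          fun e => (gh (X.ι e))⁻¹ * φt e * gh (X.τ e) with hΦ
        have hφtbar : ∀ e, φt (X.bar e) = (φt e)⁻¹ := by
          intro e
          rw [hφt]
          simp only
          rw [P.edgeWord_bar, map_inv]
        have hΦbar : X.IsCochain Φ := by
          intro e
          rw [hΦ]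
          simp only
          rw [hφtbar, X.toBSGraph.τ_bar, X.toBSGraph.ι_bar]
          group
        have hφt1 : ∀ p ∈ X.P, (p.map φt).prod = 1 := by
          intro p hp
          have hOmem : X.orientations p ∈ X.polygonOrbits := Finset.mem_image_of_mem _ hp
          have hrep := P.rep_mem _ hOmem
          obtain ⟨hrepP, k, hk⟩ := Finset.mem_filter.1 hrep
          have hrel1 : ((P.rep (X.orientations p)).map φt).prod = 1 := by
            have hr := hrel _ hOmem
            rw [← hr]
            unfold TreePresentation.pathWord
            rw [map_list_prod, List.map_map]
            rfl
          obtain ⟨t, ht | ht⟩ := orbit_prod (G := X.toBSGraph) hφtbar ⟨k, hk⟩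
          · rw [ht] at hrel1
            exact conj_eq_one hrel1
          · rw [ht] at hrel1
            exact inv_eq_one.1 (conj_eq_one hrel1)
        have hΦcocyc : X.IsCocycle Φ := by
          refine ⟨hΦbar, fun p hp => ?_⟩
          show (p.map Φ).prod = 1
          have hmap : p.map Φ = p.map fun e =>
              (fun v => (gh v)⁻¹) (X.ι e) * φt e * ((fun v => (gh v)⁻¹) (X.τ e))⁻¹ := by
            apply List.map_congr_left
            intro e _
            rw [hΦ]
            simp only [inv_inv]
          rw [hmap]
          obtain ⟨v, hv⟩ := closedProd_conj X.toBSGraph (fun v => (gh v)⁻¹) φt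
            (X.P_closed p hp)
          rw [hv, hφt1 p hp]
          group
        -- edgewise distances
        have hDbar : ∀ e, dH hN (α (X.bar e)) (Φ (X.bar e)) = dH hN (α e) (Φ e) := by
          intro e
          rw [hα e, hΦbar e, dH_inv]
        have hDS : ∀ (e : E) (he : e ∈ P.S),
            dH hN (α e) (Φ e) = dH hN (f ⟨e, he⟩) (φ ⟨e, he⟩) := by
          intro e he
          have hφte : φt e = φ ⟨e, he⟩ := by
            rw [hφt]
            simp only [TreePresentation.edgeWord, dif_pos he, FreeGroup.lift_apply_of]
          have hαe : α e = (g (X.ι e))⁻¹ * f ⟨e, he⟩ * g (X.τ e) := by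
            rw [hf]
            simp only
            group
          have hΦe : Φ e = Equiv.Perm.viaEmbeddingHom (Fin.castLEEmb hN) ((g (X.ι e))⁻¹)
              * φ ⟨e, he⟩ * Equiv.Perm.viaEmbeddingHom (Fin.castLEEmb hN) (g (X.τ e)) := by
            rw [hΦ]
            simp only
            rw [hφte, hgh]
            simp only
            rw [map_inv]
          rw [hαe, hΦe, dH_conj]
        have hDT : ∀ e ∈ P.T, dH hN (α e) (Φ e) = 1 - (n:ℝ)/N := by
          intro e he
          have hφte : φt e = 1 := by
            rw [hφt]
            simp only
            rw [P.edgeWord_tree e he, map_one]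
          have hΦe : Φ e = Equiv.Perm.viaEmbeddingHom (Fin.castLEEmb hN) (α e) := by
            rw [hΦ]
            simp only
            rw [hφte, mul_one, hgh]
            simp only
            rw [hg e he, map_mul]
            group
          rw [hΦe, dH_self]
        -- the distance estimate
        have hdistle : X.cochainDist hN α Φ ≤
            eavg (Finset.univ : Finset ↥P.S) fun s => dH hN (f s) (φ s) := by
          have hinj : ∀ a ∈ P.S, ∀ b ∈ P.S,
              ({a, X.bar a} : Finset E) = {b, X.bar b} → a = b := by
            intro a ha b hb hab
            have hbmem : b ∈ ({a, X.bar a} : Finset E) := by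
              rw [hab]; exact Finset.mem_insert_self _ _
            rcases Finset.mem_insert.1 hbmem with h | h
            · exact h.symm
            · exfalso
              have h' := Finset.mem_singleton.1 h
              have hbT : b ∉ P.T := P.S_not_tree b hb
              have hnb := (P.S_orient b hbT).1 hb
              apply hnb
              rw [h', X.toBSGraph.bar_invol]
              exact ha
          have hsub : P.S.image (fun s => ({s, X.bar s} : Finset E)) ⊆ X.edgeOrbits := by
            intro O hO
            obtain ⟨e, _, rfl⟩ := Finset.mem_image.1 hO
            exact Finset.mem_image_of_mem _ (Finset.mem_univ e)
          have hpairavg : ∀ e : E,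
              eavg ({e, X.bar e} : Finset E) (fun e' => dH hN (α e') (Φ e')) =
                dH hN (α e) (Φ e) :=
            fun e => eavg_pair (Ne.symm (X.toBSGraph.bar_ne e)) (hDbar e).symm
          have hsum_S : ∑ O ∈ P.S.image (fun s => ({s, X.bar s} : Finset E)),
              eavg O (fun e' => dH hN (α e') (Φ e')) = ∑ e ∈ P.S, dH hN (α e) (Φ e) := by
            rw [Finset.sum_image hinj]
            exact Finset.sum_congr rfl fun e _ => hpairavg e
          have hTval : ∀ O ∈ X.edgeOrbits \ P.S.image (fun s => ({s, X.bar s} : Finset E)),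
              eavg O (fun e' => dH hN (α e') (Φ e')) = 1 - (n:ℝ)/N := by
            intro O hO
            obtain ⟨hOe, hOnotS⟩ := Finset.mem_sdiff.1 hO
            obtain ⟨e, _, rfl⟩ := Finset.mem_image.1 hOe
            have heS : e ∉ P.S := fun h => hOnotS (Finset.mem_image_of_mem _ h)
            have hbS : X.bar e ∉ P.S := by
              intro h
              apply hOnotS
              have hpair : ({X.bar e, X.bar (X.bar e)} : Finset E) = {e, X.bar e} := by
                rw [X.toBSGraph.bar_invol]
                exact Finset.pair_comm _ _
              rw [← hpair]
              exact Finset.mem_image_of_mem _ h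
            rw [hpairavg e, hDT e (P.mem_T_of_not_S heS hbS)]
          have hsum_T : ∑ O ∈ X.edgeOrbits \ P.S.image (fun s => ({s, X.bar s} : Finset E)),
              eavg O (fun e' => dH hN (α e') (Φ e')) =
              ((X.edgeOrbits \ P.S.image (fun s => ({s, X.bar s} : Finset E))).card : ℝ)
                * (1 - (n:ℝ)/N) := by
            rw [Finset.sum_congr rfl hTval, Finset.sum_const, nsmul_eq_mul]
          have hsplit : (∑ O ∈ X.edgeOrbits \ P.S.image (fun s => ({s, X.bar s} : Finset E)),
                eavg O fun e' => dH hN (α e') (Φ e'))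
              + (∑ O ∈ P.S.image (fun s => ({s, X.bar s} : Finset E)),
                eavg O fun e' => dH hN (α e') (Φ e'))
              = ∑ O ∈ X.edgeOrbits, eavg O fun e' => dH hN (α e') (Φ e') :=
            Finset.sum_sdiff hsub
          have hmcard : (P.S.image (fun s => ({s, X.bar s} : Finset E))).card = P.S.card :=
            Finset.card_image_of_injOn fun a ha b hb hab => hinj a ha b hb hab
          have hm1 : 1 ≤ P.S.card := Finset.card_pos.2 hS
          have hmK : P.S.card ≤ X.edgeOrbits.card := hmcard ▸ Finset.card_le_card hsub
          have hc0 : (0:ℝ) ≤ 1 - (n:ℝ)/N := by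
            have hN0 : (0:ℝ) < N := by exact_mod_cast lt_of_lt_of_le hn hN
            have : (n:ℝ)/N ≤ 1 := by
              rw [div_le_one hN0]
              exact_mod_cast hN
            linarith
          have hSmge : (P.S.card : ℝ) * (1 - (n:ℝ)/N) ≤ ∑ e ∈ P.S, dH hN (α e) (Φ e) := by
            calc (P.S.card : ℝ) * (1 - (n:ℝ)/N) = ∑ _e ∈ P.S, (1 - (n:ℝ)/N) := by
                  rw [Finset.sum_const, nsmul_eq_mul]
            _ ≤ _ := by
                  apply Finset.sum_le_sum
                  intro e he
                  rw [hDS e he]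
                  exact dH_ge hN _ _
          have hSmnn : (0:ℝ) ≤ ∑ e ∈ P.S, dH hN (α e) (Φ e) :=
            Finset.sum_nonneg fun e _ => dH_nonneg hN _ _
          have hrhs : eavg (Finset.univ : Finset ↥P.S) (fun s => dH hN (f s) (φ s)) =
              (∑ e ∈ P.S, dH hN (α e) (Φ e)) / P.S.card := by
            unfold eavg
            rw [Finset.card_univ, Fintype.card_coe]
            congr 1
            rw [show (fun s : ↥P.S => dH hN (f s) (φ s))
                = fun s : ↥P.S => dH hN (α s.1) (Φ s.1) from funext fun s => (hDS s.1 s.2).symm]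
            exact Finset.sum_coe_sort P.S (fun e => dH hN (α e) (Φ e))
          have hlhs : X.cochainDist hN α Φ =
              (((X.edgeOrbits.card - P.S.card : ℕ) : ℝ) * (1 - (n:ℝ)/N)
                + ∑ e ∈ P.S, dH hN (α e) (Φ e)) / X.edgeOrbits.card := by
            have h0 : X.cochainDist hN α Φ =
                (∑ O ∈ X.edgeOrbits, eavg O fun e' => dH hN (α e') (Φ e'))
                  / X.edgeOrbits.card := rfl
            rw [h0, ← hsplit, hsum_T, hsum_S, Finset.card_sdiff_of_subset hsub, hmcard]
          rw [hlhs, hrhs]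
          have hK0 : (0:ℝ) < X.edgeOrbits.card := by
            exact_mod_cast lt_of_lt_of_le hm1 hmK
          have hm0 : (0:ℝ) < P.S.card := by exact_mod_cast hm1
          rw [div_le_div_iff₀ hK0 hm0]
          have hcast : ((X.edgeOrbits.card - P.S.card : ℕ) : ℝ)
              = (X.edgeOrbits.card : ℝ) - P.S.card := by
            exact Nat.cast_sub hmK
          rw [hcast]
          have hfact : (0:ℝ) ≤ (X.edgeOrbits.card : ℝ) - P.S.card := by
            have : (P.S.card : ℝ) ≤ X.edgeOrbits.card := by exact_mod_cast hmK
            linarith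
          nlinarith [mul_le_mul_of_nonneg_left hSmge hfact]
        calc sInf { d : ℝ | ∃ (N' : ℕ) (h : n ≤ N') (φ' : E → Equiv.Perm (Fin N')),
              X.IsCocycle φ' ∧ d = X.cochainDist h α φ' } ≤ X.cochainDist hN α Φ :=
              csInf_le hbdd ⟨N, hN, Φ, hΦcocyc, rfl⟩
        _ ≤ _ := hdistle
    calc X.DefCocyc α ≤ P.DefHom f := hle1
    _ ≤ ρ (P.defHom f) := hDefHom
    _ = ρ (X.localDefect α) := by rw [hlocal]
  · -- degenerate case: no generators, so everything lies in the tree and `α` is a cocycle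
    have hSno : ∀ e : E, e ∉ P.S := fun e he => hS ⟨e, he⟩
    have hallT : ∀ e, e ∈ P.T := fun e => P.mem_T_of_not_S (hSno e) (hSno (X.bar e))
    have hcocyc : X.IsCocycle α := by
      refine ⟨hα, fun p hp => ?_⟩
      show (p.map α).prod = 1
      have hmap : p.map α = p.map fun e =>
          (fun v => (g v)⁻¹) (X.ι e) * (fun _ : E => (1 : Equiv.Perm (Fin n))) e
            * ((fun v => (g v)⁻¹) (X.τ e))⁻¹ := by
        apply List.map_congr_left
        intro e _
        simp only [inv_inv, mul_one]
        rw [hg e (hallT e)]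
        group
      rw [hmap]
      obtain ⟨v, hv⟩ := closedProd_conj X.toBSGraph (fun v => (g v)⁻¹)
        (fun _ : E => (1 : Equiv.Perm (Fin n))) (X.P_closed p hp)
      rw [hv]
      have hone : (p.map fun _ : E => (1 : Equiv.Perm (Fin n))).prod = 1 :=
        List.prod_eq_one (by simp)
      rw [hone]
      group
    have hzero : X.cochainDist (le_refl n) α α = 0 := by
      unfold PolyComplex.cochainDist
      apply eavg_eq_zero
      intro O _
      apply eavg_eq_zero
      intro e _
      exact dH_refl hn (α e)
    have hle : X.DefCocyc α ≤ 0 := by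
      have hmem : X.cochainDist (le_refl n) α α ∈ { d : ℝ | ∃ (N : ℕ) (h : n ≤ N)
          (φ : E → Equiv.Perm (Fin N)), X.IsCocycle φ ∧ d = X.cochainDist h α φ } :=
        ⟨n, le_refl n, α, hcocyc, rfl⟩
      have := csInf_le hbdd hmem
      rwa [hzero] at this
    exact le_trans hle (hρ.2.1 _ hlocnn)

end StabilityPaper
end
end

section
/- Let V be a nonempty finite set and A : V × V → ℕ a symmetric matrix with all row sums equal to k ≥ 1, such that the associated multigraph is connected. Let λ₂ = max{ Σ_{x,y} A(x,y)g(x)g(y) / Σ_x g(x)² : g : V → ℝ, g ≠ 0, Σ_x g(x) = 0 } and γ = (k − λ₂)/k. Then for every n ≥ 1 and every α : V → Sym(n) there exists x₀ ∈ V such that γ · E_{y∈V}[d_h(α(y), α(x₀))] ≤ (1/(k|V|)) Σ_{x,y∈V} A(x,y)·d_h(α(x), α(y)), where y is uniform in V. In particular, the finite connected regular multigraph is ρ-cocycle stable in the 0th dimension with ρ(ε) = ε/γ: every 0-cochain α is within normalized Hamming distance ‖δα‖/γ of a constant map (a 0-cocycle). -/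
set_option maxHeartbeats 1000000


open scoped BigOperators

/-- The normalized Hamming distance between two permutations of the same degree. -/
noncomputable def dh0 {n : ℕ} (σ τ : Equiv.Perm (Fin n)) : ℝ :=
  ((Finset.univ.filter fun i : Fin n => σ i ≠ τ i).card : ℝ) / n

lemma dh0_eq {n : ℕ} (σ τ : Equiv.Perm (Fin n)) :
    dh0 σ τ = (∑ i, if σ i = τ i then (0:ℝ) else 1) / n := by
  unfold dh0
  congr 1
  rw [Finset.card_filter]
  push_cast
  refine Finset.sum_congr rfl fun i _ => ?_
  by_cases h : σ i = τ i <;> simp [h]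

lemma dh0_symm {n : ℕ} (σ τ : Equiv.Perm (Fin n)) : dh0 σ τ = dh0 τ σ := by
  unfold dh0
  rw [show (Finset.univ.filter fun i : Fin n => σ i ≠ τ i)
      = (Finset.univ.filter fun i : Fin n => τ i ≠ σ i) from
    Finset.filter_congr fun i _ => by simp [ne_comm]]

lemma sum_swap3 {V : Type*} [Fintype V] {n : ℕ} (F : V → V → Fin n → ℝ) :
    ∑ x, ∑ y, ∑ i, F x y i = ∑ i, ∑ x, ∑ y, F x y i := by
  calc ∑ x, ∑ y, ∑ i, F x y i = ∑ x, ∑ i, ∑ y, F x y i :=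
        Finset.sum_congr rfl fun x _ => Finset.sum_comm
    _ = ∑ i, ∑ x, ∑ y, F x y i := Finset.sum_comm

/-- **Proposition 5.3.** Every finite connected regular multigraph is cocycle stable in the
0th dimension with rate `ρ(ε) = ε/γ`, `γ = (k − λ₂)/k` the normalized spectral gap: for every
`0`-cochain `α : V → Sym(n)` there is a vertex `x₀` with
`γ · E_y[d_h(α(y), α(x₀))] ≤ ‖δα‖`; in particular `α` is within normalized Hamming distance
`‖δα‖/γ` of a constant map (a `0`-cocycle). -/
theorem regular_connected_cocycleStable_dim_zero
    {V : Type*} [Fintype V] [Nonempty V]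
    (A : V → V → ℕ) (k : ℕ) (hk : 1 ≤ k)
    (hsymm : ∀ x y, A x y = A y x)
    (hreg : ∀ x, ∑ y, A x y = k)
    (hconn : ∀ x y : V, Relation.ReflTransGen (fun a b => 0 < A a b) x y)
    (lam2 : ℝ)
    (hlam : IsGreatest { r : ℝ | ∃ g : V → ℝ, g ≠ 0 ∧ (∑ x, g x) = 0 ∧
        r = (∑ x, ∑ y, (A x y : ℝ) * g x * g y) / ∑ x, (g x) ^ 2 } lam2)
    (n : ℕ) (hn : 1 ≤ n) (α : V → Equiv.Perm (Fin n)) :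
    ∃ x₀ : V,
      (((k : ℝ) - lam2) / (k : ℝ)) *
          ((∑ y, dh0 (α y) (α x₀)) / (Fintype.card V : ℝ)) ≤
        (∑ x, ∑ y, (A x y : ℝ) * dh0 (α x) (α y)) / ((k : ℝ) * (Fintype.card V : ℝ)) ∧
      (∑ y, dh0 (α y) (α x₀)) / (Fintype.card V : ℝ) ≤
        ((∑ x, ∑ y, (A x y : ℝ) * dh0 (α x) (α y)) / ((k : ℝ) * (Fintype.card V : ℝ))) /
          (((k : ℝ) - lam2) / (k : ℝ)) := by
  classical
  set N : ℝ := (Fintype.card V : ℝ) with hNdef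
  have hN0 : (0:ℝ) < N := by
    rw [hNdef]; exact_mod_cast Fintype.card_pos
  have hk0 : (0:ℝ) < (k:ℝ) := by exact_mod_cast hk
  have hn0 : (0:ℝ) < (n:ℝ) := by exact_mod_cast hn
  have hrow : ∀ x, ∑ y, (A x y : ℝ) = k := by
    intro x; exact_mod_cast congrArg Nat.cast (hreg x)
  have hcol : ∀ y, ∑ x, (A x y : ℝ) = k := by
    intro y
    rw [show (∑ x, (A x y : ℝ)) = ∑ x, (A y x : ℝ) from
      Finset.sum_congr rfl fun x _ => by rw [hsymm]]
    exact hrow y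
  have hAsum : ∑ x, ∑ y, (A x y : ℝ) = (k:ℝ) * N := by
    rw [Finset.sum_congr rfl fun x _ => hrow x, Finset.sum_const, Finset.card_univ,
      nsmul_eq_mul, ← hNdef, mul_comm]
  -- spectral upper bound for mean-zero functions
  have hub : ∀ g : V → ℝ, (∑ x, g x) = 0 →
      ∑ x, ∑ y, (A x y:ℝ) * g x * g y ≤ lam2 * ∑ x, (g x)^2 := by
    intro g hg
    by_cases hg0 : g = 0
    · simp [hg0]
    · have hle := hlam.2 ⟨g, hg0, hg, rfl⟩
      have hpos : 0 < ∑ x, (g x)^2 := by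
        obtain ⟨x, hx⟩ := Function.ne_iff.mp hg0
        have hx' : g x ≠ 0 := by simpa using hx
        exact Finset.sum_pos' (fun i _ => sq_nonneg _)
          ⟨x, Finset.mem_univ x, by positivity⟩
      calc ∑ x, ∑ y, (A x y:ℝ) * g x * g y
          = ((∑ x, ∑ y, (A x y:ℝ) * g x * g y) / ∑ x, (g x)^2) * ∑ x, (g x)^2 :=
            (div_mul_cancel₀ _ hpos.ne').symm
        _ ≤ lam2 * ∑ x, (g x)^2 := mul_le_mul_of_nonneg_right hle hpos.le
  -- spectral gap
  have hgap : lam2 < (k:ℝ) := by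
    obtain ⟨g, hg0, hgs, hgr⟩ := hlam.1
    have hpos : 0 < ∑ x, (g x)^2 := by
      obtain ⟨x, hx⟩ := Function.ne_iff.mp hg0
      have hx' : g x ≠ 0 := by simpa using hx
      exact Finset.sum_pos' (fun i _ => sq_nonneg _)
        ⟨x, Finset.mem_univ x, by positivity⟩
    have heq : ∑ x, ∑ y, (A x y:ℝ) * g x * g y = lam2 * ∑ x, (g x)^2 := by
      rw [hgr]; field_simp
    by_contra hcon
    push_neg at hcon
    have e1 : ∑ x, ∑ y, (A x y:ℝ) * (g x)^2 = (k:ℝ) * ∑ x, (g x)^2 := by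
      rw [Finset.mul_sum]
      refine Finset.sum_congr rfl fun x _ => ?_
      rw [← Finset.sum_mul, hrow]
    have e2 : ∑ x, ∑ y, (A x y:ℝ) * (g y)^2 = (k:ℝ) * ∑ x, (g x)^2 := by
      rw [Finset.sum_comm, Finset.mul_sum]
      refine Finset.sum_congr rfl fun y _ => ?_
      rw [← Finset.sum_mul, hcol]
    have hE : ∑ x, ∑ y, (A x y:ℝ) * (g x - g y)^2
        = 2*(k:ℝ)*(∑ x, (g x)^2) - 2*(∑ x, ∑ y, (A x y:ℝ) * g x * g y) := by
      have h1 : ∀ x, ∑ y, (A x y:ℝ) * (g x - g y)^2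
          = (∑ y, (A x y:ℝ)*(g x)^2) - (∑ y, 2*((A x y:ℝ)*g x*g y))
            + (∑ y, (A x y:ℝ)*(g y)^2) := by
        intro x
        rw [← Finset.sum_sub_distrib, ← Finset.sum_add_distrib]
        exact Finset.sum_congr rfl fun y _ => by ring
      rw [Finset.sum_congr rfl fun x _ => h1 x]
      rw [Finset.sum_add_distrib, Finset.sum_sub_distrib]
      have h2 : ∑ x, ∑ y, 2*((A x y:ℝ)*g x*g y)
          = 2 * ∑ x, ∑ y, (A x y:ℝ)*g x*g y := by
        rw [Finset.mul_sum]
        refine Finset.sum_congr rfl fun x _ => ?_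
        rw [Finset.mul_sum]
      rw [h2, e1, e2]; ring
    have hE0 : ∑ x, ∑ y, (A x y:ℝ) * (g x - g y)^2 ≤ 0 := by
      rw [hE, heq]; nlinarith [hpos]
    have hEnn : ∀ x ∈ (Finset.univ : Finset V), 0 ≤ ∑ y, (A x y:ℝ) * (g x - g y)^2 :=
      fun x _ => Finset.sum_nonneg fun y _ => by positivity
    have hEeq : ∑ x, ∑ y, (A x y:ℝ) * (g x - g y)^2 = 0 :=
      le_antisymm hE0 (Finset.sum_nonneg hEnn)
    have houter := (Finset.sum_eq_zero_iff_of_nonneg hEnn).mp hEeq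
    have hedge : ∀ a b : V, 0 < A a b → g a = g b := by
      intro a b hab
      have hinner := (Finset.sum_eq_zero_iff_of_nonneg
        (fun y (_ : y ∈ Finset.univ) => by positivity)).mp (houter a (Finset.mem_univ a))
      have h := hinner b (Finset.mem_univ b)
      have hA : (0:ℝ) < (A a b : ℝ) := by exact_mod_cast hab
      have hsq : (g a - g b)^2 = 0 := by
        rcases mul_eq_zero.mp h with h' | h'
        · exact absurd h' hA.ne'
        · exact h'
      have := pow_eq_zero_iff (n := 2) (by norm_num) |>.mp hsq
      linarith [sub_eq_zero.mp this]
    have hconst : ∀ x y : V, g x = g y := by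
      intro x y
      have h := hconn x y
      induction h with
      | refl => rfl
      | tail _ hab ih => exact ih.trans (hedge _ _ hab)
    obtain ⟨x₁⟩ := ‹Nonempty V›
    have : ∑ x, g x = N * g x₁ := by
      rw [Finset.sum_congr rfl fun x _ => hconst x x₁, Finset.sum_const,
        Finset.card_univ, nsmul_eq_mul, ← hNdef]
    have hgx1 : g x₁ = 0 := by
      rw [hgs] at this
      have := this.symm
      rcases mul_eq_zero.mp this with h' | h'
      · exact absurd h' hN0.ne'
      · exact h'
    exact hg0 (funext fun x => by rw [hconst x x₁, hgx1]; rfl)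
  -- general spectral bound
  have hspec : ∀ f0 : V → ℝ, ∑ x, ∑ y, (A x y:ℝ) * f0 x * f0 y ≤
      lam2 * (∑ x, (f0 x)^2) + ((k:ℝ) - lam2) * (∑ x, f0 x)^2 / N := by
    intro f0
    set m : ℝ := (∑ x, f0 x) / N with hm
    have hfm : ∑ x, f0 x = N * m := by rw [hm]; field_simp
    set g : V → ℝ := fun x => f0 x - m with hgdef
    have hgs : ∑ x, g x = 0 := by
      simp only [hgdef, Finset.sum_sub_distrib, Finset.sum_const, Finset.card_univ,
        nsmul_eq_mul]
      rw [hfm, ← hNdef]; ring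
    have key := hub g hgs
    have hg2 : ∑ x, (g x)^2 = ∑ x, (f0 x)^2 - N * m^2 := by
      have h1 : ∀ x, (g x)^2 = (f0 x)^2 - 2*m*f0 x + m^2 := fun x => by
        simp only [hgdef]; ring
      rw [Finset.sum_congr rfl fun x _ => h1 x, Finset.sum_add_distrib,
        Finset.sum_sub_distrib, ← Finset.mul_sum, hfm, Finset.sum_const,
        Finset.card_univ, nsmul_eq_mul, ← hNdef]
      ring
    have hAff : ∑ x, ∑ y, (A x y:ℝ)*f0 x*f0 y
        = (∑ x, ∑ y, (A x y:ℝ)*g x*g y) + (k:ℝ)*N*m^2 := by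
      have hterm : ∀ x y, (A x y:ℝ)*f0 x*f0 y
          = (A x y:ℝ)*g x*g y + ((A x y:ℝ)*(g x*m)) + ((A x y:ℝ)*(g y*m))
            + (A x y:ℝ)*(m*m) := by
        intro x y
        have hx : f0 x = g x + m := by simp [hgdef]
        have hy : f0 y = g y + m := by simp [hgdef]
        rw [hx, hy]; ring
      have split : ∑ x, ∑ y, (A x y:ℝ)*f0 x*f0 y
          = (∑ x, ∑ y, (A x y:ℝ)*g x*g y) + (∑ x, ∑ y, (A x y:ℝ)*(g x*m))
            + (∑ x, ∑ y, (A x y:ℝ)*(g y*m)) + (∑ x, ∑ y, (A x y:ℝ)*(m*m)) := by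
        rw [Finset.sum_congr rfl fun x _ => Finset.sum_congr rfl fun y _ => hterm x y]
        simp only [Finset.sum_add_distrib]
      have hp2 : ∑ x, ∑ y, (A x y:ℝ)*(g x*m) = 0 := by
        have h1 : ∀ x, ∑ y, (A x y:ℝ)*(g x*m) = (k:ℝ)*(g x*m) := by
          intro x; rw [← Finset.sum_mul, hrow]
        rw [Finset.sum_congr rfl fun x _ => h1 x]
        have : ∑ x, (k:ℝ)*(g x*m) = (k:ℝ)*m*∑ x, g x := by
          rw [Finset.mul_sum]
          exact Finset.sum_congr rfl fun x _ => by ring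
        rw [this, hgs, mul_zero]
      have hp3 : ∑ x, ∑ y, (A x y:ℝ)*(g y*m) = 0 := by
        rw [Finset.sum_comm]
        have h1 : ∀ y, ∑ x, (A x y:ℝ)*(g y*m) = (k:ℝ)*(g y*m) := by
          intro y; rw [← Finset.sum_mul, hcol]
        rw [Finset.sum_congr rfl fun y _ => h1 y]
        have : ∑ y, (k:ℝ)*(g y*m) = (k:ℝ)*m*∑ y, g y := by
          rw [Finset.mul_sum]
          exact Finset.sum_congr rfl fun y _ => by ring
        rw [this, hgs, mul_zero]
      have hp4 : ∑ x, ∑ y, (A x y:ℝ)*(m*m) = (k:ℝ)*N*m^2 := by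
        have h1 : ∀ x, ∑ y, (A x y:ℝ)*(m*m) = (k:ℝ)*(m*m) := by
          intro x; rw [← Finset.sum_mul, hrow]
        rw [Finset.sum_congr rfl fun x _ => h1 x, Finset.sum_const, Finset.card_univ,
          nsmul_eq_mul, ← hNdef]
        ring
      rw [split, hp2, hp3, hp4]; ring
    have hq : lam2 * ∑ x, (g x)^2 = lam2 * (∑ x, (f0 x)^2) - lam2*(N*m^2) := by
      rw [hg2]; ring
    have hrhs : lam2 * (∑ x, (f0 x)^2) + ((k:ℝ)-lam2)*(∑ x, f0 x)^2/N
        = lam2 * (∑ x, (f0 x)^2) + ((k:ℝ)-lam2)*(N*m^2) := by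
      rw [hfm]; field_simp
    rw [hAff, hrhs]
    linarith [key, hq]
  -- indicator functions
  set f : Fin n → Fin n → V → ℝ := fun i j x => if α x i = j then 1 else 0 with hfdef
  set s : Fin n → Fin n → ℝ := fun i j => ∑ x, f i j x with hsdef
  have hchi : ∀ (i : Fin n) (x y : V),
      (if α x i = α y i then (1:ℝ) else 0) = ∑ j, f i j x * f i j y := by
    intro i x y
    symm
    calc ∑ j, f i j x * f i j y
        = ∑ j, (if α x i = j then (if α y i = j then (1:ℝ) else 0) else 0) :=
          Finset.sum_congr rfl fun j _ => by
            simp only [hfdef]; split_ifs <;> ring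
      _ = if α y i = α x i then (1:ℝ) else 0 := by
          rw [Finset.sum_ite_eq]; simp
      _ = if α x i = α y i then (1:ℝ) else 0 := by simp [eq_comm]
  have hsj : ∀ i, ∑ j, s i j = N := by
    intro i
    simp only [hsdef]
    rw [Finset.sum_comm]
    have h1 : ∀ x : V, ∑ j, f i j x = 1 := fun x => by
      simp only [hfdef]; rw [Finset.sum_ite_eq]; simp
    rw [Finset.sum_congr rfl fun x _ => h1 x, Finset.sum_const, Finset.card_univ,
      nsmul_eq_mul, mul_one, ← hNdef]
  have hfsq : ∀ i j, ∑ x, (f i j x)^2 = s i j := by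
    intro i j
    have h1 : ∀ x, (f i j x)^2 = f i j x := fun x => by
      simp only [hfdef]; split_ifs <;> norm_num
    rw [Finset.sum_congr rfl fun x _ => h1 x]
  set Q : Fin n → Fin n → ℝ := fun i j => ∑ x, ∑ y, (A x y:ℝ) * f i j x * f i j y
    with hQdef
  set S : ℝ := ∑ x, ∑ y, (A x y : ℝ) * dh0 (α x) (α y) with hSdef
  set T : ℝ := ∑ x, ∑ y, dh0 (α x) (α y) with hTdef
  set U : ℝ := ∑ i, ∑ j, (s i j)^2 with hUdef
  have hsplitA : ∀ (i : Fin n) (x y : V),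
      (A x y:ℝ) * (∑ j, f i j x * f i j y) = ∑ j, (A x y:ℝ) * f i j x * f i j y := by
    intro i x y
    rw [Finset.mul_sum]
    exact Finset.sum_congr rfl fun j _ => by ring
  have hSform : S = ((k:ℝ) * N * n - ∑ i, ∑ j, Q i j) / n := by
    have hd : ∀ x y : V, (A x y:ℝ) * dh0 (α x) (α y)
        = (∑ i, ((A x y:ℝ) - (A x y:ℝ) * (∑ j, f i j x * f i j y))) / n := by
      intro x y
      rw [dh0_eq, ← mul_div_assoc]
      congr 1
      rw [Finset.mul_sum]
      refine Finset.sum_congr rfl fun i _ => ?_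
      rw [← hchi i x y]
      split_ifs <;> ring
    rw [hSdef]
    rw [Finset.sum_congr rfl fun x _ => Finset.sum_congr rfl fun y _ => hd x y]
    simp only [← Finset.sum_div]
    congr 1
    rw [sum_swap3]
    have h3 : ∀ i : Fin n,
        ∑ x, ∑ y, ((A x y:ℝ) - (A x y:ℝ) * (∑ j, f i j x * f i j y))
          = (k:ℝ)*N - ∑ j, Q i j := by
      intro i
      simp only [Finset.sum_sub_distrib]
      rw [hAsum]
      congr 1
      rw [Finset.sum_congr rfl fun x _ => Finset.sum_congr rfl fun y _ => hsplitA i x y]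
      rw [sum_swap3]
    rw [Finset.sum_congr rfl fun i _ => h3 i, Finset.sum_sub_distrib,
      Finset.sum_const, Finset.card_univ, Fintype.card_fin, nsmul_eq_mul]
    ring
  have hTform : T = (N^2 * n - U) / n := by
    have hd : ∀ x y : V, dh0 (α x) (α y)
        = (∑ i, ((1:ℝ) - (∑ j, f i j x * f i j y))) / n := by
      intro x y
      rw [dh0_eq]
      congr 1
      refine Finset.sum_congr rfl fun i _ => ?_
      rw [← hchi i x y]
      split_ifs <;> ring
    rw [hTdef]
    rw [Finset.sum_congr rfl fun x _ => Finset.sum_congr rfl fun y _ => hd x y]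
    simp only [← Finset.sum_div]
    congr 1
    rw [sum_swap3]
    have h3 : ∀ i : Fin n,
        ∑ x, ∑ y : V, ((1:ℝ) - (∑ j, f i j x * f i j y))
          = N^2 - ∑ j, (s i j)^2 := by
      intro i
      simp only [Finset.sum_sub_distrib]
      have h1 : ∑ x : V, ∑ y : V, (1:ℝ) = N^2 := by
        simp only [Finset.sum_const, Finset.card_univ, nsmul_eq_mul, mul_one, ← hNdef]
        ring
      rw [h1]
      congr 1
      rw [sum_swap3]
      refine Finset.sum_congr rfl fun j _ => ?_
      have h2 : ∀ x : V, ∑ y, f i j x * f i j y = f i j x * s i j := by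
        intro x
        rw [← Finset.mul_sum]
      rw [Finset.sum_congr rfl fun x _ => h2 x, ← Finset.sum_mul,
        show (∑ x, f i j x) = s i j from rfl]
      ring
    rw [Finset.sum_congr rfl fun i _ => h3 i, Finset.sum_sub_distrib,
      Finset.sum_const, Finset.card_univ, Fintype.card_fin, nsmul_eq_mul, hUdef]
    ring
  have hQle : ∑ i, ∑ j, Q i j ≤ lam2 * N * n + ((k:ℝ) - lam2) * U / N := by
    have h1 : ∀ i j, Q i j ≤ lam2 * s i j + ((k:ℝ) - lam2) * (s i j)^2 / N := by
      intro i j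
      have h := hspec (f i j)
      rw [hfsq i j] at h
      have hs' : ∑ x, f i j x = s i j := by simp only [hsdef]
      rw [hs'] at h
      simpa only [hQdef] using h
    calc ∑ i, ∑ j, Q i j
        ≤ ∑ i, ∑ j, (lam2 * s i j + ((k:ℝ)-lam2) * (s i j)^2 / N) :=
          Finset.sum_le_sum fun i _ => Finset.sum_le_sum fun j _ => h1 i j
      _ = ∑ i, (lam2 * N + ((k:ℝ)-lam2) * (∑ j, (s i j)^2) / N) := by
          refine Finset.sum_congr rfl fun i _ => ?_
          rw [Finset.sum_add_distrib, ← Finset.mul_sum, hsj i]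
          congr 1
          rw [Finset.mul_sum, Finset.sum_div]
      _ = lam2 * N * n + ((k:ℝ)-lam2) * U / N := by
          rw [Finset.sum_add_distrib, Finset.sum_const, Finset.card_univ,
            Fintype.card_fin, nsmul_eq_mul]
          have : ∑ i, ((k:ℝ)-lam2) * (∑ j, (s i j)^2) / N
              = ((k:ℝ)-lam2) * U / N := by
            rw [hUdef, Finset.mul_sum, Finset.sum_div]
          rw [this]
          ring
  have hcore : (((k:ℝ) - lam2) / N) * T ≤ S := by
    rw [hSform, hTform]
    have hQle' : (∑ i, ∑ j, Q i j) * N ≤ lam2 * N * n * N + ((k:ℝ) - lam2) * U := by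
      have := mul_le_mul_of_nonneg_right hQle hN0.le
      rwa [add_mul, div_mul_cancel₀ _ hN0.ne'] at this
    have heq : ((k:ℝ) - lam2) / N * ((N^2 * n - U) / n)
        = (((k:ℝ) - lam2) * (N^2 * n - U) / N) / n := by ring
    rw [heq, div_le_div_iff_of_pos_right hn0, div_le_iff₀ hN0]
    nlinarith [hQle']
  obtain ⟨x₀, -, hx₀⟩ := Finset.exists_min_image Finset.univ
    (fun x => ∑ y, dh0 (α y) (α x)) ⟨Classical.arbitrary V, Finset.mem_univ _⟩
  set D : ℝ := ∑ y, dh0 (α y) (α x₀) with hDdef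
  have hDT : N * D ≤ T := by
    have hT' : T = ∑ x, ∑ y, dh0 (α y) (α x) := by
      rw [hTdef]
      exact Finset.sum_congr rfl fun x _ => Finset.sum_congr rfl fun y _ => dh0_symm _ _
    rw [hT']
    calc N * D = ∑ _x : V, D := by
          rw [Finset.sum_const, Finset.card_univ, nsmul_eq_mul, ← hNdef]
      _ ≤ ∑ x, ∑ y, dh0 (α y) (α x) :=
          Finset.sum_le_sum fun x _ => hx₀ x (Finset.mem_univ x)
  have hγ : (0:ℝ) < ((k:ℝ) - lam2) / (k:ℝ) := div_pos (by linarith) hk0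
  have key : ((k:ℝ) - lam2) * D ≤ S := by
    have h1 : (((k:ℝ) - lam2)/N) * (N*D) ≤ (((k:ℝ) - lam2)/N) * T :=
      mul_le_mul_of_nonneg_left hDT (div_nonneg (by linarith) hN0.le)
    have h2 : (((k:ℝ) - lam2)/N) * (N*D) = ((k:ℝ) - lam2) * D := by
      field_simp
    linarith [hcore]
  have main : (((k:ℝ) - lam2) / (k:ℝ)) * (D / N) ≤ S / ((k:ℝ) * N) := by
    rw [div_mul_div_comm, div_le_div_iff₀ (by positivity) (by positivity)]
    exact mul_le_mul_of_nonneg_right key (by positivity)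
  exact ⟨x₀, main, by rw [le_div_iff₀ hγ, mul_comm]; exact main⟩
end
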